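/- arXiv:2112.08537 — 2 statements merged into one kernel-verified Lean document; each statement's English description precedes it below -/
import Mathlib

section
/- (Theorem 1.) Let R be a universal R-matrix for H with Drinfeld u-operator u. Then Δ(u)·(τ(R)·R) = u⊗u in the algebra H⊗H; equivalently, Δ(u) = (u⊗u)·(RᵀR)⁻¹ where Rᵀ := τ(R). -/
open TensorProduct

noncomputable section

variable (k H : Type*) [CommRing k] [Ring H] [HopfAlgebra k H]

/-- The k-linear swap `τ : H ⊗ H → H ⊗ H`, `x ⊗ y ↦ y ⊗ x`. -/
def tau : H ⊗[k] H →ₗ[k] H ⊗[k] H := (TensorProduct.comm k H H).toLinearMap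

/-- The opposite comultiplication `Δᵀ := τ ∘ Δ`. -/
def DeltaT : H →ₗ[k] H ⊗[k] H := tau k H ∘ₗ Coalgebra.comul

/-- Embedding of `H ⊗ H` into slots (1,2) of `H ⊗ (H ⊗ H)`: `x ⊗ y ↦ x ⊗ y ⊗ 1`. -/
def emb12 : H ⊗[k] H →ₐ[k] H ⊗[k] (H ⊗[k] H) :=
  Algebra.TensorProduct.map (AlgHom.id k H) Algebra.TensorProduct.includeLeft

/-- Embedding of `H ⊗ H` into slots (1,3) of `H ⊗ (H ⊗ H)`: `x ⊗ y ↦ x ⊗ 1 ⊗ y`. -/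
def emb13 : H ⊗[k] H →ₐ[k] H ⊗[k] (H ⊗[k] H) :=
  Algebra.TensorProduct.map (AlgHom.id k H) Algebra.TensorProduct.includeRight

/-- Embedding of `H ⊗ H` into slots (2,3) of `H ⊗ (H ⊗ H)`: `x ⊗ y ↦ 1 ⊗ x ⊗ y`. -/
def emb23 : H ⊗[k] H →ₐ[k] H ⊗[k] (H ⊗[k] H) :=
  Algebra.TensorProduct.includeRight

/-- The map `Δ ⊗ id : H ⊗ H → H ⊗ (H ⊗ H)`. -/
def DeltaId : H ⊗[k] H →ₗ[k] H ⊗[k] (H ⊗[k] H) :=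
  (TensorProduct.assoc k H H H).toLinearMap ∘ₗ
    TensorProduct.map Coalgebra.comul LinearMap.id

/-- The map `id ⊗ Δ : H ⊗ H → H ⊗ (H ⊗ H)`. -/
def IdDelta : H ⊗[k] H →ₗ[k] H ⊗[k] (H ⊗[k] H) :=
  TensorProduct.map LinearMap.id Coalgebra.comul

/-- `R` is a universal R-matrix: it is invertible, satisfies the two hexagon
relations `(Δ⊗id)R = R₁₃R₂₃`, `(id⊗Δ)R = R₁₃R₁₂`, and intertwines `Δ` with `Δᵀ`. -/
structure IsUniversalRMatrix (R : H ⊗[k] H) : Prop where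
  isUnit : IsUnit R
  hexagon1 : DeltaId k H R = emb13 k H R * emb23 k H R
  hexagon2 : IdDelta k H R = emb13 k H R * emb12 k H R
  intertwine : ∀ a : H, R * Coalgebra.comul a = DeltaT k H a * R

/-- The Drinfeld u-operator `u = m ((S ⊗ id) (τ R))`. -/
def uOp (R : H ⊗[k] H) : H :=
  LinearMap.mul' k H
    (TensorProduct.map (HopfAlgebra.antipode (R := k)) LinearMap.id (tau k H R))


/-!
Write `R = ∑ aᵢ ⊗ bᵢ` and `ξ = comulAntipodeMul R = ∑ Δ(S bᵢ)(aᵢ ⊗ 1)`. The second hexagon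
relation, with `Δ ∘ S = (S ⊗ S) ∘ Δᵀ`, gives `ξ = (S² ⊗ S)(R) (u ⊗ 1)`, and the standard facts
`(S ⊗ id) R = R⁻¹`, `(S ⊗ S) R = R` and `u x = S²(x) u` turn this into `R ξ = u ⊗ 1`.
The map `x ⊗ y ⊗ z ↦ Δ(S z)(x ⊗ y)` sends `(Δ ⊗ id) R` to `Δ(u)`, as `Δ` is multiplicative,
and `R₁₃R₂₃` to `∑ Δ(S bᵢ) ξ (1 ⊗ aᵢ)`; multiplying by `R` on the left and using
`R Δ(a) = Δᵀ(a) R` and `R ξ = u ⊗ 1` gives `R Δ(u) = τ(ξ (1 ⊗ u))`. Since `RᵀR` commutes with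
`Δ(H)`, `Δ(u) RᵀR = Rᵀ (R Δ(u)) = τ(R ξ (1 ⊗ u)) = u ⊗ u`.
-/

open Coalgebra HopfAlgebra WithConv
open scoped RingTheory.LinearMap

section

variable {k H}

@[simp] lemma tau_tmul (a b : H) : tau k H (a ⊗ₜ b) = b ⊗ₜ a := rfl

@[simp] lemma tau_tau (x : H ⊗[k] H) : tau k H (tau k H x) = x := TensorProduct.comm_comm k H H x

lemma tau_mul (x y : H ⊗[k] H) : tau k H (x * y) = tau k H x * tau k H y :=
  map_mul (Algebra.TensorProduct.comm k H H) x y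

lemma DeltaId_tmul (a b : H) {ι : Type*} (ℛa : Repr k a ι) :
    DeltaId k H (a ⊗ₜ b) = ∑ i ∈ ℛa.index, ℛa.left i ⊗ₜ (ℛa.right i ⊗ₜ b) := by
  simp [DeltaId, ← ℛa.eq, TensorProduct.sum_tmul]

lemma IdDelta_tmul (a b : H) {ι : Type*} (ℛb : Repr k b ι) :
    IdDelta k H (a ⊗ₜ b) = ∑ i ∈ ℛb.index, a ⊗ₜ (ℛb.left i ⊗ₜ ℛb.right i) := by
  simp [IdDelta, ← ℛb.eq, TensorProduct.tmul_sum]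

lemma Coalgebra.sum_counit_mul_counit {R C : Type*} [CommSemiring R] [AddCommMonoid C]
    [Module R C] [Coalgebra R C] {a : C} {ι : Type*} (ℛa : Repr R a ι) :
    ∑ i ∈ ℛa.index, counit (R := R) (ℛa.left i) * counit (R := R) (ℛa.right i) = counit a := by
  simpa using congrArg (counit (R := R)) (sum_counit_smul ℛa)

lemma LinearMap.toConv_algHom_comp_mul {R A B C : Type*} [CommSemiring R] [Semiring A]
    [Algebra R A] [Semiring B] [Algebra R B] [AddCommMonoid C] [Module R C] [CoalgebraStruct R C]
    (φ : A →ₐ[R] B) (f g : C →ₗ[R] A) :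
    toConv (φ.toLinearMap ∘ₗ f) * toConv (φ.toLinearMap ∘ₗ g) =
      toConv (φ.toLinearMap ∘ₗ (toConv f * toConv g).ofConv) :=
  congrArg toConv (algHom_comp_convMul_distrib φ (toConv f) (toConv g)) |>.symm

lemma LinearMap.toConv_algHom_comp_one {R A B C : Type*} [CommSemiring R] [Semiring A]
    [Algebra R A] [Semiring B] [Algebra R B] [AddCommMonoid C] [Module R C] [Coalgebra R C]
    (φ : A →ₐ[R] B) :
    toConv (φ.toLinearMap ∘ₗ (1 : WithConv (C →ₗ[R] A)).ofConv) = 1 := by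
  ext x; simp [convOne_def]

/- In the convolution algebra of linear maps `H → H ⊗ H`, with `ι₁ f = f(-) ⊗ 1` and
`ι₂ g = 1 ⊗ g(-)`, one has `Δ = ι₁ id * ι₂ id` and `(S ⊗ S) ∘ Δᵀ = ι₂ S * ι₁ S`, so the latter
is a left inverse of `Δ`; the right inverse of `Δ` is `Δ ∘ S`. -/
theorem HopfAlgebra.comul_comp_antipode :
    comul ∘ₗ antipode k = (antipode k ⊗ₘ antipode k) ∘ₗ tau k H ∘ₗ comul := by
  let ι₁ : H →ₐ[k] H ⊗[k] H := Algebra.TensorProduct.includeLeft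
  let ι₂ : H →ₐ[k] H ⊗[k] H := Algebra.TensorProduct.includeRight
  have h₁₂ (f g : H →ₗ[k] H) : toConv (ι₁.toLinearMap ∘ₗ f) * toConv (ι₂.toLinearMap ∘ₗ g) =
      toConv ((f ⊗ₘ g) ∘ₗ comul) := by
    ext x; rw [(ℛ k x).convMul_apply]; simp [ι₁, ι₂, ← (ℛ k x).eq]
  have h₂₁ (f g : H →ₗ[k] H) : toConv (ι₂.toLinearMap ∘ₗ g) * toConv (ι₁.toLinearMap ∘ₗ f) =
      toConv ((f ⊗ₘ g) ∘ₗ tau k H ∘ₗ comul) := by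
    ext x; rw [(ℛ k x).convMul_apply]; simp [ι₁, ι₂, ← (ℛ k x).eq, tau]
  have hcomul : toConv (comul (R := k) (A := H)) =
      toConv (ι₁.toLinearMap ∘ₗ .id) * toConv (ι₂.toLinearMap ∘ₗ .id) := by
    rw [h₁₂, TensorProduct.map_id, LinearMap.id_comp]
  have hleft : toConv ((antipode k ⊗ₘ antipode k) ∘ₗ tau k H ∘ₗ comul) * toConv comul = 1 := by
    rw [← h₂₁, hcomul, mul_assoc, ← mul_assoc (toConv (ι₁.toLinearMap ∘ₗ _)),
      LinearMap.toConv_algHom_comp_mul, LinearMap.antipode_mul_id,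
      LinearMap.toConv_algHom_comp_one, one_mul, LinearMap.toConv_algHom_comp_mul,
      LinearMap.antipode_mul_id, LinearMap.toConv_algHom_comp_one]
  apply WithConv.toConv_injective
  calc toConv (comul ∘ₗ antipode k)
      = toConv ((antipode k ⊗ₘ antipode k) ∘ₗ tau k H ∘ₗ comul) * toConv comul *
          toConv (comul ∘ₗ antipode k) := by rw [hleft, one_mul]
    _ = _ := by rw [mul_assoc, LinearMap.comul_right_inv, mul_one]

theorem HopfAlgebra.comul_antipode (x : H) :
    comul (antipode k x) = (antipode k ⊗ₘ antipode k) (tau k H (comul x)) :=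
  LinearMap.congr_fun comul_comp_antipode x

@[simp] lemma uOp_tmul (a b : H) : uOp k H (a ⊗ₜ b) = antipode k b * a := by simp [uOp]

lemma uOp_add (W W' : H ⊗[k] H) : uOp k H (W + W') = uOp k H W + uOp k H W' := by
  simp [uOp]

lemma uOp_sum {ι : Type*} (s : Finset ι) (f : ι → H ⊗[k] H) :
    uOp k H (∑ i ∈ s, f i) = ∑ i ∈ s, uOp k H (f i) := by
  simp [uOp, map_sum]

lemma uOp_mul_tmul (W : H ⊗[k] H) (p q : H) :
    uOp k H (W * p ⊗ₜ q) = antipode k q * (uOp k H W * p) := by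
  induction W using TensorProduct.induction_on with
  | zero => simp [uOp]
  | tmul a b => simp [Algebra.TensorProduct.tmul_mul_tmul, antipode_mul_antidistrib, mul_assoc]
  | add W W' hW hW' => simp [uOp_add, hW, hW', add_mul, mul_add]

lemma uOp_DeltaT_mul (y : H) (W : H ⊗[k] H) :
    uOp k H (DeltaT k H y * W) = counit (R := k) y • uOp k H W := by
  induction W using TensorProduct.induction_on with
  | zero => simp [uOp]
  | tmul a b =>
    rw [DeltaT, LinearMap.comp_apply, ← (ℛ k y).eq]
    simp only [map_sum, tau_tmul, Finset.sum_mul, Algebra.TensorProduct.tmul_mul_tmul, uOp_sum,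
      uOp_tmul, antipode_mul_antidistrib]
    calc ∑ i ∈ (ℛ k y).index,
          antipode k b * antipode k ((ℛ k y).left i) * ((ℛ k y).right i * a)
        = antipode k b *
            (∑ i ∈ (ℛ k y).index, antipode k ((ℛ k y).left i) * (ℛ k y).right i) * a := by
          simp [Finset.mul_sum, Finset.sum_mul, mul_assoc]
      _ = _ := by rw [sum_antipode_mul_eq_smul, mul_smul_comm, mul_one, smul_mul_assoc]
  | add W W' hW hW' => simp [uOp_add, hW, hW', mul_add]

lemma sum_antipode_mul_uOp_mul {R : H ⊗[k] H} (hR : ∀ a : H, R * comul a = DeltaT k H a * R)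
    (y : H) {ι : Type*} (ℛy : Repr k y ι) :
    ∑ i ∈ ℛy.index, antipode k (ℛy.right i) * (uOp k H R * ℛy.left i) =
      counit (R := k) y • uOp k H R := by
  rw [← uOp_DeltaT_mul, ← hR, ← ℛy.eq, Finset.mul_sum]
  simp only [uOp_sum, uOp_mul_tmul]

/- In the convolution algebra of linear maps `H → Hᵐᵒᵖ`, `(x ↦ u x) * S = ε(-) u` is
`sum_antipode_mul_uOp_mul`, and `S` has the right inverse `S²`; hence `x ↦ u x` equals
`ε(-) u * S²`, which is `x ↦ S²(x) u`. -/
open MulOpposite in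
theorem uOp_mul {R : H ⊗[k] H} (hR : ∀ a : H, R * comul a = DeltaT k H a * R) (x : H) :
    uOp k H R * x = antipode k (antipode k x) * uOp k H R := by
  let op : H →ₗ[k] Hᵐᵒᵖ := (opLinearEquiv k).toLinearMap
  have hS : toConv (op ∘ₗ antipode k) * toConv (op ∘ₗ antipode k ∘ₗ antipode k) = 1 := by
    ext y
    rw [(ℛ k y).convMul_apply]
    apply unop_injective
    simp [op, ← antipode_mul_antidistrib, ← map_sum, sum_mul_antipode_eq_smul,
      Algebra.algebraMap_eq_smul_one]
  have hu : toConv (op ∘ₗ LinearMap.mulLeft k (uOp k H R)) * toConv (op ∘ₗ antipode k) =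
      toConv (counit.smulRight (op (uOp k H R))) := by
    ext y
    rw [(ℛ k y).convMul_apply]
    apply unop_injective
    simp [op, ← sum_antipode_mul_uOp_mul hR y (ℛ k y)]
  have hε : toConv (counit.smulRight (op (uOp k H R))) *
      toConv (op ∘ₗ antipode k ∘ₗ antipode k) =
        toConv (op ∘ₗ LinearMap.mulRight k (uOp k H R) ∘ₗ antipode k ∘ₗ antipode k) := by
    ext y
    rw [(ℛ k y).convMul_apply]
    apply unop_injective
    conv_rhs => rw [← sum_counit_smul (ℛ k y)]
    simp [op]
  have h : toConv (op ∘ₗ LinearMap.mulLeft k (uOp k H R)) =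
      toConv (op ∘ₗ LinearMap.mulRight k (uOp k H R) ∘ₗ antipode k ∘ₗ antipode k) := by
    rw [← hε, ← hu, mul_assoc, hS, mul_one]
  apply op_injective
  simpa [op] using congrArg (fun f ↦ f.ofConv x) h

variable (k H) in
def counitLeft (A : Type*) [Semiring A] [Algebra k A] : H ⊗[k] A →ₐ[k] A :=
  (Algebra.TensorProduct.lid k A).toAlgHom.comp
    (Algebra.TensorProduct.map (Bialgebra.counitAlgHom k H) (AlgHom.id k A))

variable (k H) in
def counitRight (A : Type*) [Semiring A] [Algebra k A] : A ⊗[k] H →ₐ[k] A :=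
  (Algebra.TensorProduct.rid k k A).toAlgHom.comp
    (Algebra.TensorProduct.map (AlgHom.id k A) (Bialgebra.counitAlgHom k H))

@[simp] lemma counitLeft_tmul {A : Type*} [Semiring A] [Algebra k A] (a : H) (x : A) :
    counitLeft k H A (a ⊗ₜ x) = counit (R := k) a • x := by
  simp [counitLeft]

@[simp] lemma counitRight_tmul {A : Type*} [Semiring A] [Algebra k A] (x : A) (a : H) :
    counitRight k H A (x ⊗ₜ a) = counit (R := k) a • x := by
  simp [counitRight]

def comulAntipodeMul : H ⊗[k] H →ₗ[k] H ⊗[k] H :=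
  LinearMap.mul' k (H ⊗[k] H) ∘ₗ
    ((comul ∘ₗ antipode k) ⊗ₘ Algebra.TensorProduct.includeLeft.toLinearMap) ∘ₗ tau k H

@[simp] lemma comulAntipodeMul_tmul (a b : H) :
    comulAntipodeMul (a ⊗ₜ b) = comul (R := k) (antipode k b) * (a ⊗ₜ 1) := by
  simp [comulAntipodeMul]

end

namespace IsUniversalRMatrix

variable {k H} {R : H ⊗[k] H}

/- `ε ⊗ ε ⊗ id` turns the first hexagon relation into `e = e * e` for the unit
`e = (ε ⊗ id) R`. -/
lemma counitLeft_eq_one (hR : IsUniversalRMatrix k H R) : counitLeft k H H R = 1 := by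
  let ε₁₂ := (counitLeft k H H).comp (counitLeft k H (H ⊗[k] H))
  have hΔ (W : H ⊗[k] H) : ε₁₂ (DeltaId k H W) = counitLeft k H H W := by
    induction W using TensorProduct.induction_on with
    | zero => simp
    | tmul a b =>
      simp [ε₁₂, DeltaId_tmul a b (ℛ k a), smul_smul, ← Finset.sum_smul, sum_counit_mul_counit]
    | add W W' hW hW' => simp_all
  have h₁₃ (W : H ⊗[k] H) : ε₁₂ (emb13 k H W) = counitLeft k H H W := by
    induction W using TensorProduct.induction_on with
    | zero => simp
    | tmul a b => simp [ε₁₂, emb13]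
    | add W W' hW hW' => simp_all
  have h₂₃ (W : H ⊗[k] H) : ε₁₂ (emb23 k H W) = counitLeft k H H W := by
    induction W using TensorProduct.induction_on with
    | zero => simp
    | tmul a b => simp [ε₁₂, emb23]
    | add W W' hW hW' => simp_all
  have h := congrArg ε₁₂ hR.hexagon1
  rw [hΔ, map_mul, h₁₃, h₂₃] at h
  exact (IsIdempotentElem.iff_eq_one_of_isUnit (hR.isUnit.map _)).1 h.symm

lemma counitRight_eq_one (hR : IsUniversalRMatrix k H R) : counitRight k H H R = 1 := by
  let ε₂₃ := (counitRight k H H).comp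
    (Algebra.TensorProduct.map (AlgHom.id k H) (counitRight k H H))
  have hΔ (W : H ⊗[k] H) : ε₂₃ (IdDelta k H W) = counitRight k H H W := by
    induction W using TensorProduct.induction_on with
    | zero => simp
    | tmul a b =>
      simp [ε₂₃, IdDelta_tmul a b (ℛ k b), smul_smul, ← Finset.sum_smul, mul_comm,
        sum_counit_mul_counit]
    | add W W' hW hW' => simp_all
  have h₁₃ (W : H ⊗[k] H) : ε₂₃ (emb13 k H W) = counitRight k H H W := by
    induction W using TensorProduct.induction_on with
    | zero => simp
    | tmul a b => simp [ε₂₃, emb13]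
    | add W W' hW hW' => simp_all
  have h₁₂ (W : H ⊗[k] H) : ε₂₃ (emb12 k H W) = counitRight k H H W := by
    induction W using TensorProduct.induction_on with
    | zero => simp
    | tmul a b => simp [ε₂₃, emb12]
    | add W W' hW hW' => simp_all
  have h := congrArg ε₂₃ hR.hexagon2
  rw [hΔ, map_mul, h₁₃, h₁₂] at h
  exact (IsIdempotentElem.iff_eq_one_of_isUnit (hR.isUnit.map _)).1 h.symm

lemma map_antipode_id_mul_self (hR : IsUniversalRMatrix k H R) :
    (antipode k ⊗ₘ LinearMap.id) R * R = 1 := by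
  let Z : H ⊗[k] (H ⊗[k] H) →ₗ[k] H ⊗[k] H := LinearMap.mul' k (H ⊗[k] H) ∘ₗ
    ((Algebra.TensorProduct.includeLeft.toLinearMap ∘ₗ antipode k) ⊗ₘ LinearMap.id)
  have hΔ (W : H ⊗[k] H) : Z (DeltaId k H W) = 1 ⊗ₜ counitLeft k H H W := by
    induction W using TensorProduct.induction_on with
    | zero => simp
    | tmul a b =>
      simp [Z, DeltaId_tmul a b (ℛ k a), Algebra.TensorProduct.tmul_mul_tmul,
        ← TensorProduct.sum_tmul, sum_antipode_mul_eq_smul, TensorProduct.smul_tmul]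
    | add W W' hW hW' => simp_all [TensorProduct.tmul_add]
  have hemb (W W' : H ⊗[k] H) :
      Z (emb13 k H W * emb23 k H W') = (antipode k ⊗ₘ LinearMap.id) W * W' := by
    induction W using TensorProduct.induction_on with
    | zero => simp
    | tmul a b =>
      induction W' using TensorProduct.induction_on with
      | zero => simp
      | tmul c d => simp [Z, emb13, emb23, Algebra.TensorProduct.tmul_mul_tmul]
      | add W W' hW hW' => simp_all [mul_add]
    | add W W' hW hW' => simp_all [add_mul]
  have h := congrArg Z hR.hexagon1
  rwa [hΔ, hemb, hR.counitLeft_eq_one, eq_comm] at h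

lemma mul_map_antipode_id (hR : IsUniversalRMatrix k H R) :
    R * (antipode k ⊗ₘ LinearMap.id) R = 1 := by
  obtain ⟨U, rfl⟩ := hR.isUnit
  rw [(Units.mul_eq_one_iff_eq_inv).1 hR.map_antipode_id_mul_self, Units.mul_inv]

lemma map_antipode_antipode (hR : IsUniversalRMatrix k H R) :
    (antipode k ⊗ₘ antipode k) R = R := by
  let Z : H ⊗[k] (H ⊗[k] H) →ₗ[k] H ⊗[k] H :=
    antipode k ⊗ₘ (LinearMap.mul' k H ∘ₗ (LinearMap.id ⊗ₘ antipode k))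
  have hΔ (W : H ⊗[k] H) : Z (IdDelta k H W) = antipode k (counitRight k H H W) ⊗ₜ 1 := by
    induction W using TensorProduct.induction_on with
    | zero => simp
    | tmul a b =>
      simp [Z, IdDelta_tmul a b (ℛ k b), ← TensorProduct.tmul_sum, sum_mul_antipode_eq_smul,
        TensorProduct.smul_tmul]
    | add W W' hW hW' => simp_all [TensorProduct.add_tmul]
  have hemb (W W' : H ⊗[k] H) : Z (emb13 k H W * emb12 k H W') =
      (antipode k ⊗ₘ LinearMap.id) W' * (antipode k ⊗ₘ antipode k) W := by
    induction W using TensorProduct.induction_on with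
    | zero => simp
    | tmul a b =>
      induction W' using TensorProduct.induction_on with
      | zero => simp
      | tmul c d =>
        simp [Z, emb13, emb12, Algebra.TensorProduct.tmul_mul_tmul, antipode_mul_antidistrib]
      | add W W' hW hW' => simp_all [mul_add, add_mul]
    | add W W' hW hW' => simp_all [mul_add, add_mul]
  have h := congrArg Z hR.hexagon2
  rw [hΔ, hemb, hR.counitRight_eq_one, antipode_one, ← Algebra.TensorProduct.one_def] at h
  calc (antipode k ⊗ₘ antipode k) R
      = R * (antipode k ⊗ₘ LinearMap.id) R * (antipode k ⊗ₘ antipode k) R := by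
        rw [hR.mul_map_antipode_id, one_mul]
    _ = R := by rw [mul_assoc, ← h, mul_one]

lemma mul_comulAntipodeMul (hR : IsUniversalRMatrix k H R) :
    R * comulAntipodeMul R = uOp k H R ⊗ₜ 1 := by
  let Φ : H ⊗[k] (H ⊗[k] H) →ₗ[k] H ⊗[k] H := LinearMap.mul' k (H ⊗[k] H) ∘ₗ
    (((antipode k ⊗ₘ antipode k) ∘ₗ tau k H) ⊗ₘ
      Algebra.TensorProduct.includeLeft.toLinearMap) ∘ₗ
    (TensorProduct.comm k H (H ⊗[k] H)).toLinearMap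
  have hΔ (W : H ⊗[k] H) : Φ (IdDelta k H W) = comulAntipodeMul W := by
    induction W using TensorProduct.induction_on with
    | zero => simp
    | tmul a b => simp [Φ, IdDelta, comul_antipode]
    | add W W' hW hW' => simp_all
  have hemb (W W' : H ⊗[k] H) : Φ (emb13 k H W * emb12 k H W') =
      (uOp k H W ⊗ₜ 1) * (LinearMap.id ⊗ₘ antipode k) W' := by
    induction W using TensorProduct.induction_on with
    | zero => simp [uOp]
    | tmul a b =>
      induction W' using TensorProduct.induction_on with
      | zero => simp
      | tmul c d => simp [Φ, emb13, emb12, Algebra.TensorProduct.tmul_mul_tmul, mul_assoc]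
      | add W W' hW hW' => simp_all [mul_add]
    | add W W' hW hW' => simp_all [add_mul, uOp_add, TensorProduct.add_tmul]
  have hu (W : H ⊗[k] H) : (uOp k H R ⊗ₜ 1) * (LinearMap.id ⊗ₘ antipode k) W =
      ((antipode k ∘ₗ antipode k) ⊗ₘ antipode k) W * (uOp k H R ⊗ₜ 1) := by
    induction W using TensorProduct.induction_on with
    | zero => simp
    | tmul a b => simp [Algebra.TensorProduct.tmul_mul_tmul, uOp_mul hR.intertwine]
    | add W W' hW hW' => simp_all [mul_add, add_mul]
  have hSS : ((antipode k ∘ₗ antipode k) ⊗ₘ antipode k) R = (antipode k ⊗ₘ LinearMap.id) R := by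
    conv_rhs => rw [← hR.map_antipode_antipode, ← LinearMap.comp_apply, ← TensorProduct.map_comp,
      LinearMap.id_comp]
  rw [← hΔ, hR.hexagon2, hemb, hu, hSS, ← mul_assoc, hR.mul_map_antipode_id, one_mul]

lemma mul_comul_uOp (hR : IsUniversalRMatrix k H R) :
    R * comul (uOp k H R) = tau k H (comulAntipodeMul R * (1 ⊗ₜ uOp k H R)) := by
  let Ψ : H ⊗[k] (H ⊗[k] H) →ₗ[k] H ⊗[k] H := LinearMap.mul' k (H ⊗[k] H) ∘ₗ
    ((comul ∘ₗ antipode k) ⊗ₘ LinearMap.id) ∘ₗ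
    (TensorProduct.comm k (H ⊗[k] H) H).toLinearMap ∘ₗ
    (TensorProduct.assoc k H H H).symm.toLinearMap
  have hΔ (W : H ⊗[k] H) : Ψ (DeltaId k H W) = comul (uOp k H W) := by
    induction W using TensorProduct.induction_on with
    | zero => simp [uOp]
    | tmul a b => simp [Ψ, DeltaId, Bialgebra.comul_mul]
    | add W W' hW hW' => simp_all [uOp_add]
  have hemb (W : H ⊗[k] H) (c d : H) : Ψ (emb13 k H W * emb23 k H (c ⊗ₜ d)) =
      comul (antipode k d) * comulAntipodeMul W * (1 ⊗ₜ c) := by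
    induction W using TensorProduct.induction_on with
    | zero => simp
    | tmul a b =>
      simp [Ψ, emb13, emb23, Algebra.TensorProduct.tmul_mul_tmul, antipode_mul_antidistrib,
        Bialgebra.comul_mul, mul_assoc]
    | add W W' hW hW' => simp_all [mul_add, add_mul]
  have hR₁₃R₂₃ (W : H ⊗[k] H) : R * Ψ (emb13 k H R * emb23 k H W) =
      tau k H (comulAntipodeMul W * (1 ⊗ₜ uOp k H R)) := by
    induction W using TensorProduct.induction_on with
    | zero => simp
    | tmul c d =>
      rw [hemb, ← mul_assoc, ← mul_assoc, hR.intertwine, mul_assoc _ R, hR.mul_comulAntipodeMul,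
        comulAntipodeMul_tmul, tau_mul, tau_mul]
      simp [DeltaT, Algebra.TensorProduct.tmul_mul_tmul, mul_assoc]
    | add W W' hW hW' => simp_all [mul_add, add_mul]
  rw [← hΔ, hR.hexagon1, hR₁₃R₂₃]

lemma commute_comul_tau_mul (hR : IsUniversalRMatrix k H R) (x : H) :
    Commute (comul x) (tau k H R * R) := by
  have h := congrArg (tau k H) (hR.intertwine x)
  simp only [tau_mul, DeltaT, LinearMap.comp_apply, tau_tau] at h
  rw [Commute, SemiconjBy, ← mul_assoc, ← h, mul_assoc, ← LinearMap.comp_apply (tau k H), ← DeltaT,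
    ← hR.intertwine, mul_assoc]

end IsUniversalRMatrix

/-- Theorem 1: `Δ(u) · (Rᵀ·R) = u ⊗ u` in `H ⊗ H`, where `Rᵀ = τ(R)`;
equivalently `Δ(u) = (u ⊗ u)(RᵀR)⁻¹`. -/
theorem comul_uOp (R : H ⊗[k] H) (hR : IsUniversalRMatrix k H R) :
    Coalgebra.comul (R := k) (uOp k H R) * (tau k H R * R) =
      uOp k H R ⊗ₜ[k] uOp k H R := by
  rw [(hR.commute_comul_tau_mul _).eq, mul_assoc, hR.mul_comul_uOp, ← tau_mul, ← mul_assoc,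
    hR.mul_comulAntipodeMul, Algebra.TensorProduct.tmul_mul_tmul, mul_one, one_mul, tau_tmul]
end
end

section
/- Let R be a universal R-matrix for H with Drinfeld u-operator u. Then u⁻¹ = m(((S⁻¹∘S⁻¹)⊗id)(τ(R))); that is, writing R = Σᵢ aᵢ⊗bᵢ, u⁻¹ = Σᵢ S⁻²(bᵢ)·aᵢ. -/
open TensorProduct

noncomputable section

variable (k H : Type*) [CommRing k] [Ring H] [HopfAlgebra k H]

-- ==== auxiliary development ====

/-- Kill the second tensor factor via the counit (composed with the unit). -/
def Keps : H ⊗[k] H →ₗ[k] H ⊗[k] H :=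
  TensorProduct.map LinearMap.id (Algebra.linearMap k H ∘ₗ Coalgebra.counit)

lemma Keps_tmul (a b : H) :
    Keps k H (a ⊗ₜ[k] b) = a ⊗ₜ[k] (algebraMap k H (Coalgebra.counit (R := k) b)) := rfl

lemma Keps_one : Keps k H 1 = 1 := by
  rw [Algebra.TensorProduct.one_def, Keps_tmul]
  simp

lemma Keps_mul (P Q : H ⊗[k] H) : Keps k H (P * Q) = Keps k H P * Keps k H Q := by
  induction P using TensorProduct.induction_on with
  | zero => simp
  | tmul a b =>
    induction Q using TensorProduct.induction_on with
    | zero => simp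
    | tmul c d =>
      simp [Keps_tmul, Algebra.TensorProduct.tmul_mul_tmul, map_mul]
    | add u v hu hv => simp only [mul_add, map_add, hu, hv]
  | add u v hu hv => simp only [add_mul, map_add, hu, hv]

/-- collapse of the left factor by the counit -/
def psi2 : H ⊗[k] H →ₗ[k] H :=
  (TensorProduct.lid k H).toLinearMap ∘ₗ
    LinearMap.rTensor H (Coalgebra.counit (R := k) (A := H))

lemma psi2_tmul (a b : H) :
    psi2 k H (a ⊗ₜ[k] b) = Coalgebra.counit (R := k) a • b := by
  simp [psi2]

lemma psi2_comul : psi2 k H ∘ₗ Coalgebra.comul = LinearMap.id := by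
  ext a
  simp [psi2]

def Gmap : H ⊗[k] (H ⊗[k] H) →ₗ[k] H ⊗[k] H :=
  TensorProduct.map LinearMap.id (psi2 k H)

lemma G_IdDelta : Gmap k H ∘ₗ IdDelta k H = LinearMap.id := by
  rw [Gmap, IdDelta, ← TensorProduct.map_comp, psi2_comul, LinearMap.id_comp,
    TensorProduct.map_id]

lemma G_mul (P Q : H ⊗[k] H) :
    Gmap k H (emb13 k H P * emb12 k H Q) = P * Keps k H Q := by
  induction P using TensorProduct.induction_on with
  | zero => simp
  | tmul a b =>
    induction Q using TensorProduct.induction_on with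
    | zero => simp
    | tmul c d =>
      have h1 : emb13 k H (a ⊗ₜ[k] b) = a ⊗ₜ[k] ((1 : H) ⊗ₜ[k] b) := by
        simp [emb13]
      have h2 : emb12 k H (c ⊗ₜ[k] d) = c ⊗ₜ[k] (d ⊗ₜ[k] (1 : H)) := by
        simp [emb12]
      rw [h1, h2, Algebra.TensorProduct.tmul_mul_tmul,
        Algebra.TensorProduct.tmul_mul_tmul, one_mul, mul_one, Keps_tmul,
        Algebra.TensorProduct.tmul_mul_tmul]
      simp only [Gmap, TensorProduct.map_tmul, LinearMap.id_coe, id_eq, psi2_tmul]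
      rw [Algebra.smul_def, ← Algebra.commutes, ← Algebra.smul_def,
        TensorProduct.tmul_smul]
    | add u v hu hv => simp only [map_add, mul_add, hu, hv]
  | add u v hu hv => simp only [map_add, add_mul, hu, hv]

def phi : H ⊗[k] H →ₗ[k] H :=
  LinearMap.mul' k H ∘ₗ LinearMap.rTensor H (HopfAlgebra.antipode (R := k))

def Fmap : H ⊗[k] (H ⊗[k] H) →ₗ[k] H ⊗[k] H :=
  TensorProduct.map LinearMap.id (phi k H)

lemma phi_tmul (a b : H) :
    phi k H (a ⊗ₜ[k] b) = HopfAlgebra.antipode (R := k) a * b := by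
  simp [phi]

lemma F_IdDelta : Fmap k H ∘ₗ IdDelta k H = Keps k H := by
  rw [Fmap, IdDelta, ← TensorProduct.map_comp, LinearMap.id_comp, phi,
    LinearMap.comp_assoc, HopfAlgebra.mul_antipode_rTensor_comul, Keps]

lemma F_mul (P Q : H ⊗[k] H) :
    Fmap k H (emb12 k H P * emb13 k H Q) =
      TensorProduct.map LinearMap.id (HopfAlgebra.antipode (R := k)) P * Q := by
  induction P using TensorProduct.induction_on with
  | zero => simp
  | tmul a b =>
    induction Q using TensorProduct.induction_on with
    | zero => simp
    | tmul c d =>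
      have h1 : emb12 k H (a ⊗ₜ[k] b) = a ⊗ₜ[k] (b ⊗ₜ[k] (1 : H)) := by
        simp [emb12]
      have h2 : emb13 k H (c ⊗ₜ[k] d) = c ⊗ₜ[k] ((1 : H) ⊗ₜ[k] d) := by
        simp [emb13]
      rw [h1, h2, Algebra.TensorProduct.tmul_mul_tmul,
        Algebra.TensorProduct.tmul_mul_tmul, one_mul, mul_one]
      simp only [Fmap, TensorProduct.map_tmul, LinearMap.id_coe, id_eq, phi_tmul,
        Algebra.TensorProduct.tmul_mul_tmul]
    | add u v hu hv => simp only [map_add, mul_add, hu, hv]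
  | add u v hu hv => simp only [map_add, add_mul, hu, hv]

lemma IdDelta_mul (P Q : H ⊗[k] H) :
    IdDelta k H (P * Q) = IdDelta k H P * IdDelta k H Q := by
  induction P using TensorProduct.induction_on with
  | zero => simp
  | tmul a b =>
    induction Q using TensorProduct.induction_on with
    | zero => simp
    | tmul c d =>
      simp only [IdDelta, Algebra.TensorProduct.tmul_mul_tmul,
        TensorProduct.map_tmul, LinearMap.id_coe, id_eq, Bialgebra.comul_mul]
    | add u v hu hv => simp only [map_add, mul_add, hu, hv]
  | add u v hu hv => simp only [map_add, add_mul, hu, hv]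

lemma IdDelta_one : IdDelta k H 1 = 1 := by
  rw [Algebra.TensorProduct.one_def]
  simp only [IdDelta, TensorProduct.map_tmul, LinearMap.id_coe, id_eq,
    Bialgebra.comul_one]
  rw [← Algebra.TensorProduct.one_def]

/-- `u⁻¹ = m (((S⁻¹ ∘ S⁻¹) ⊗ id)(τ R))`: writing `R = Σ aᵢ ⊗ bᵢ`,
`u⁻¹ = Σ S⁻²(bᵢ)·aᵢ`. -/
theorem uOp_inv_eq (R R' : H ⊗[k] H) (hR : IsUniversalRMatrix k H R)
    (hRR' : R * R' = 1) (hR'R : R' * R = 1)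
    (Sinv : H →ₗ[k] H)
    (hS1 : ∀ a : H, Sinv (HopfAlgebra.antipode (R := k) a) = a)
    (hS2 : ∀ a : H, HopfAlgebra.antipode (R := k) (Sinv a) = a) :
    LinearMap.mul' k H (TensorProduct.map Sinv LinearMap.id (tau k H R')) =
      LinearMap.mul' k H
        (TensorProduct.map (Sinv ∘ₗ Sinv) LinearMap.id (tau k H R)) := by
  -- Step 1 : Keps R = 1
  have hGR : R = R * Keps k H R := by
    have h := congrArg (Gmap k H) hR.hexagon2
    rwa [← LinearMap.comp_apply, G_IdDelta, LinearMap.id_apply, G_mul] at h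
  have hKR : Keps k H R = 1 := by
    calc Keps k H R = (R' * R) * Keps k H R := by rw [hR'R, one_mul]
    _ = R' * (R * Keps k H R) := by rw [mul_assoc]
    _ = R' * R := by rw [← hGR]
    _ = 1 := hR'R
  -- Step 2 : Keps R' = 1
  have hKR' : Keps k H R' = 1 := by
    calc Keps k H R' = Keps k H R * Keps k H R' := by rw [hKR, one_mul]
    _ = Keps k H (R * R') := (Keps_mul k H R R').symm
    _ = 1 := by rw [hRR', Keps_one]
  -- Step 3 : hexagon for R'
  have hXX' : IdDelta k H R' * IdDelta k H R = 1 := by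
    rw [← IdDelta_mul, hR'R, IdDelta_one]
  have hBB' : emb12 k H R * emb12 k H R' = 1 := by
    rw [← map_mul, hRR', map_one]
  have hAA' : emb13 k H R * emb13 k H R' = 1 := by
    rw [← map_mul, hRR', map_one]
  have hex2' : IdDelta k H R' = emb12 k H R' * emb13 k H R' := by
    have h1 : IdDelta k H R * (emb12 k H R' * emb13 k H R') = 1 := by
      rw [hR.hexagon2]
      calc emb13 k H R * emb12 k H R * (emb12 k H R' * emb13 k H R')
          = emb13 k H R * ((emb12 k H R * emb12 k H R') * emb13 k H R') := by
            rw [mul_assoc, mul_assoc]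
        _ = emb13 k H R * emb13 k H R' := by rw [hBB', one_mul]
        _ = 1 := hAA'
    symm
    calc emb12 k H R' * emb13 k H R'
        = (IdDelta k H R' * IdDelta k H R) * (emb12 k H R' * emb13 k H R') := by
          rw [hXX', one_mul]
      _ = IdDelta k H R' * (IdDelta k H R * (emb12 k H R' * emb13 k H R')) := by
          rw [mul_assoc]
      _ = IdDelta k H R' := by rw [h1, mul_one]
  -- Step 4 : (id ⊗ S) R' = R
  have hFR' : TensorProduct.map LinearMap.id (HopfAlgebra.antipode (R := k)) R' * R' = 1 := by
    have h := congrArg (Fmap k H) hex2'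
    rw [← LinearMap.comp_apply, F_IdDelta, F_mul] at h
    rw [← h, hKR']
  have hIdS : TensorProduct.map LinearMap.id (HopfAlgebra.antipode (R := k)) R' = R := by
    calc TensorProduct.map LinearMap.id (HopfAlgebra.antipode (R := k)) R'
        = TensorProduct.map LinearMap.id (HopfAlgebra.antipode (R := k)) R' * (R' * R) := by
          rw [hR'R, mul_one]
      _ = (TensorProduct.map LinearMap.id (HopfAlgebra.antipode (R := k)) R' * R') * R := by
          rw [mul_assoc]
      _ = R := by rw [hFR', one_mul]
  -- Step 5 : R' = (id ⊗ Sinv) R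
  have hcancel : ∀ t : H ⊗[k] H,
      TensorProduct.map LinearMap.id Sinv
        (TensorProduct.map LinearMap.id (HopfAlgebra.antipode (R := k)) t) = t := by
    intro t
    induction t using TensorProduct.induction_on with
    | zero => simp
    | tmul a b => simp [hS1]
    | add u v hu hv => simp only [map_add, hu, hv]
  have hR'eq : R' = TensorProduct.map LinearMap.id Sinv R := by
    rw [← hIdS, hcancel]
  -- Step 6 : conclude
  rw [hR'eq]
  congr 1
  have htau : ∀ t : H ⊗[k] H,
      tau k H (TensorProduct.map LinearMap.id Sinv t) =
        TensorProduct.map Sinv LinearMap.id (tau k H t) := by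
    intro t
    induction t using TensorProduct.induction_on with
    | zero => simp
    | tmul a b => simp [tau]
    | add u v hu hv => simp only [map_add, hu, hv]
  rw [htau]
  have : ∀ t : H ⊗[k] H,
      TensorProduct.map Sinv LinearMap.id (TensorProduct.map Sinv LinearMap.id t) =
        TensorProduct.map (Sinv ∘ₗ Sinv) LinearMap.id t := by
    intro t
    induction t using TensorProduct.induction_on with
    | zero => simp
    | tmul a b => simp
    | add u v hu hv => simp only [map_add, hu, hv]
  rw [this]
end
end
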